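/- arXiv:2308.14945 — 8 statements merged into one kernel-verified Lean document; each statement's English description precedes it below -/
import Mathlib

section
/- Let A, b > 0, define ω(γ) := (2A+γ)(A+γ)/((A+γ)² + b) for γ > −A, and let Δ := (1/2)(1 + √(1 + A²/b)) and 0 < λ ≤ 1/Δ. For any γ₀ ∈ (−A, ∞), define γ_{k+1} = γ_k(1 − λω(γ_k)). Then: (i) γ_k ∈ (−A, ∞) for all k; (ii) the sign of γ_k is constant (each γ_k lies between 0 and γ₀) and |γ_k| is nonincreasing; (iii) |γ_k| ≤ (1 − λδ)^k |γ₀| for all k, where δ := min( ω(γ₀), 2A²/(A² + b) ) > 0; in particular γ_k → 0 monotonically and linearly. -/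
set_option maxHeartbeats 1000000

lemma quasi_aux (A b x₀ x x₁ : ℝ) (hA : 0 < A) (hb : 0 < b)
    (h0 : 0 < x₀) (h1 : x₀ ≤ x) (h2 : x ≤ x₁) :
    min ((x₀^2 + A*x₀)/(x₀^2 + b)) ((x₁^2 + A*x₁)/(x₁^2 + b))
      ≤ (x^2 + A*x)/(x^2 + b) := by
  by_contra h
  push_neg at h
  rw [lt_min_iff] at h
  obtain ⟨ha, hbb⟩ := h
  rw [div_lt_div_iff₀ (by positivity) (by positivity)] at ha hbb
  have hxx0 : x₀ < x := lt_of_le_of_ne h1 (by rintro rfl; exact lt_irrefl _ ha)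
  have hxx1 : x < x₁ := lt_of_le_of_ne h2 (by rintro rfl; exact lt_irrefl _ hbb)
  have hp0 : (0:ℝ) < x - x₀ := by linarith
  have hp1 : (0:ℝ) < x₁ - x := by linarith
  have H0 : b*(x+x₀) - A*x*x₀ + A*b < 0 := by nlinarith [ha, hp0]
  have H1 : 0 < b*(x+x₁) - A*x*x₁ + A*b := by nlinarith [hbb, hp1]
  have hd : (0:ℝ) < x₁ - x₀ := by linarith
  have hbAx : 0 < b - A*x := by nlinarith [H0, H1, hd]
  nlinarith [mul_pos h0 hbAx, mul_pos hA hb, mul_pos hb (h0.trans_le h1)]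

/-- For the BRWP deviation recurrence `γ_{k+1} = γ_k(1 − λ ω(γ_k))` with
`ω(γ) = (2A+γ)(A+γ)/((A+γ)² + b)`, `Δ = (1/2)(1 + √(1 + A²/b))` and `0 < λ ≤ 1/Δ`:
(i) `γ_k > −A` for all `k`; (ii) each `γ_k` lies between `0` and `γ₀` and `|γ_k|` is
nonincreasing; (iii) `|γ_k| ≤ (1 − λδ)^k |γ₀|` with
`δ = min(ω(γ₀), 2A²/(A²+b)) > 0`; in particular `γ_k → 0`. -/
theorem stmt_5 (A b lam Δ δ : ℝ) (γ : ℕ → ℝ) (ω : ℝ → ℝ)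
    (hA : 0 < A) (hb : 0 < b)
    (hω : ∀ g, ω g = (2 * A + g) * (A + g) / ((A + g) ^ 2 + b))
    (hΔ : Δ = (1 / 2) * (1 + Real.sqrt (1 + A ^ 2 / b)))
    (hlam0 : 0 < lam) (hlam : lam ≤ 1 / Δ)
    (hγ0 : -A < γ 0)
    (hrec : ∀ k, γ (k + 1) = γ k * (1 - lam * ω (γ k)))
    (hδ : δ = min (ω (γ 0)) (2 * A ^ 2 / (A ^ 2 + b))) :
    (∀ k, -A < γ k) ∧
    (∀ k, γ k ∈ Set.uIcc 0 (γ 0)) ∧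
    (∀ k, |γ (k + 1)| ≤ |γ k|) ∧
    0 < δ ∧
    (∀ k, |γ k| ≤ (1 - lam * δ) ^ k * |γ 0|) ∧
    Filter.Tendsto γ Filter.atTop (nhds 0) := by
  -- basic facts about Δ
  have hargpos : (0:ℝ) ≤ 1 + A ^ 2 / b := by positivity
  have hs2 : (Real.sqrt (1 + A ^ 2 / b)) ^ 2 = 1 + A ^ 2 / b := Real.sq_sqrt hargpos
  have hs1 : 1 < Real.sqrt (1 + A ^ 2 / b) := by
    nlinarith [Real.sqrt_nonneg (1 + A ^ 2 / b), div_pos (pow_pos hA 2) hb]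
  have hΔ1 : 1 < Δ := by rw [hΔ]; linarith
  have hΔ0 : 0 < Δ := by linarith
  have hkey : 4 * Δ * (Δ - 1) * b = A ^ 2 := by
    rw [hΔ]
    have : 4 * (1 / 2 * (1 + Real.sqrt (1 + A ^ 2 / b))) *
        (1 / 2 * (1 + Real.sqrt (1 + A ^ 2 / b)) - 1) * b
        = ((Real.sqrt (1 + A ^ 2 / b)) ^ 2 - 1) * b := by ring
    rw [this, hs2]
    field_simp
    ring
  -- ω as a function of x = A + g
  have hωx : ∀ g, ω g = ((A+g)^2 + A*(A+g)) / ((A+g)^2 + b) := by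
    intro g; rw [hω]; ring_nf
  -- positivity of ω on (-A, ∞)
  have hωpos : ∀ g, -A < g → 0 < ω g := by
    intro g hg
    rw [hω]
    have h1 : 0 < A + g := by linarith
    have h2 : 0 < 2 * A + g := by linarith
    positivity
  -- ω ≤ Δ everywhere
  have hωΔ : ∀ g, ω g ≤ Δ := by
    intro g
    rw [hω, div_le_iff₀ (by positivity)]
    nlinarith [sq_nonneg (2 * (Δ - 1) * (A + g) - A), hkey, hΔ1]
  -- lam * Δ ≤ 1
  have hlamΔ : lam * Δ ≤ 1 := by
    rw [le_div_iff₀ hΔ0] at hlam; linarith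
  -- the multiplier is in [0,1) for g > -A
  have hfac : ∀ g, -A < g → 0 ≤ 1 - lam * ω g ∧ 1 - lam * ω g < 1 := by
    intro g hg
    constructor
    · have h1 : lam * ω g ≤ lam * Δ := by
        apply mul_le_mul_of_nonneg_left (hωΔ g) hlam0.le
      linarith
    · have := mul_pos hlam0 (hωpos g hg); linarith
  -- membership invariant
  have hmem : ∀ k, γ k ∈ Set.uIcc 0 (γ 0) := by
    intro k
    induction k with
    | zero => exact Set.right_mem_uIcc
    | succ k ih =>
      have hgk : -A < γ k := by
        rcases Set.mem_uIcc.1 ih with ⟨h1, _⟩ | ⟨h1, _⟩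
        · linarith
        · linarith
      obtain ⟨hf0, hf1⟩ := hfac (γ k) hgk
      have hsub : Set.uIcc 0 (γ k) ⊆ Set.uIcc 0 (γ 0) :=
        Set.uIcc_subset_uIcc Set.left_mem_uIcc ih
      apply hsub
      rw [hrec k, Set.mem_uIcc]
      rcases le_or_gt 0 (γ k) with h | h
      · left; constructor
        · positivity
        · nlinarith
      · right; constructor
        · nlinarith
        · nlinarith [mul_nonpos_of_nonpos_of_nonneg h.le hf0]
  have hgtA : ∀ k, -A < γ k := by
    intro k
    rcases Set.mem_uIcc.1 (hmem k) with ⟨h1, _⟩ | ⟨h1, _⟩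
    · linarith
    · linarith
  -- δ = min (ω γ0) (ω 0)
  have hω0 : ω 0 = 2 * A ^ 2 / (A ^ 2 + b) := by rw [hω]; ring_nf
  have hδ' : δ = min (ω (γ 0)) (ω 0) := by rw [hδ, hω0]
  have hδpos : 0 < δ := by
    rw [hδ']
    exact lt_min (hωpos _ hγ0) (hωpos 0 (by linarith))
  -- δ ≤ ω (γ k)
  have hδω : ∀ k, δ ≤ ω (γ k) := by
    intro k
    rcases le_or_gt 0 (γ 0) with h | h
    · have hk := Set.mem_uIcc.1 (hmem k)
      have hk' : 0 ≤ γ k ∧ γ k ≤ γ 0 := by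
        rcases hk with ⟨h1, h2⟩ | ⟨h1, h2⟩
        · exact ⟨h1, h2⟩
        · constructor <;> linarith
      have := quasi_aux A b (A + 0) (A + γ k) (A + γ 0) hA hb (by linarith)
        (by linarith [hk'.1]) (by linarith [hk'.2])
      rw [hδ', hωx (γ 0), hωx (γ k), hωx 0, min_comm]
      exact this
    · have hk := Set.mem_uIcc.1 (hmem k)
      have hk' : γ 0 ≤ γ k ∧ γ k ≤ 0 := by
        rcases hk with ⟨h1, h2⟩ | ⟨h1, h2⟩
        · constructor <;> linarith
        · exact ⟨h1, h2⟩
      have := quasi_aux A b (A + γ 0) (A + γ k) (A + 0) hA hb (by linarith)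
        (by linarith [hk'.1]) (by linarith [hk'.2])
      rw [hδ', hωx (γ 0), hωx (γ k), hωx 0]
      exact this
  -- contraction step
  have hlamδ : 0 ≤ 1 - lam * δ := by
    have : δ ≤ Δ := le_trans (hδω 0) (hωΔ _)
    nlinarith
  have hstep : ∀ k, |γ (k + 1)| ≤ (1 - lam * δ) * |γ k| := by
    intro k
    rw [hrec k, abs_mul, mul_comm]
    apply mul_le_mul_of_nonneg_right _ (abs_nonneg _)
    rw [abs_of_nonneg (hfac (γ k) (hgtA k)).1]
    have := hδω k
    nlinarith
  have hmono : ∀ k, |γ (k + 1)| ≤ |γ k| := by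
    intro k
    calc |γ (k + 1)| ≤ (1 - lam * δ) * |γ k| := hstep k
      _ ≤ 1 * |γ k| := by
          apply mul_le_mul_of_nonneg_right _ (abs_nonneg _)
          nlinarith [mul_pos hlam0 hδpos]
      _ = |γ k| := one_mul _
  have hgeo : ∀ k, |γ k| ≤ (1 - lam * δ) ^ k * |γ 0| := by
    intro k
    induction k with
    | zero => simp
    | succ k ih =>
      calc |γ (k + 1)| ≤ (1 - lam * δ) * |γ k| := hstep k
        _ ≤ (1 - lam * δ) * ((1 - lam * δ) ^ k * |γ 0|) :=
            mul_le_mul_of_nonneg_left ih hlamδ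
        _ = (1 - lam * δ) ^ (k + 1) * |γ 0| := by ring
  refine ⟨hgtA, hmem, hmono, hδpos, hgeo, ?_⟩
  have hr1 : (1 - lam * δ) < 1 := by nlinarith [mul_pos hlam0 hδpos]
  have htend : Filter.Tendsto (fun k => (1 - lam * δ) ^ k * |γ 0|) Filter.atTop (nhds 0) := by
    have := (tendsto_pow_atTop_nhds_zero_of_lt_one hlamδ hr1).mul_const |γ 0|
    simpa using this
  exact squeeze_zero_norm (fun n => by rw [Real.norm_eq_abs]; exact hgeo n) htend
end

section
/- Let ξ_d > 0, κ ≥ 1, ξ₁ := κ·ξ_d, T := ξ_d/3, Δ₁ := (1/2)(√((ξ₁+T)/(2T)) + 1), and η := ξ_d/Δ₁. Then Δ₁ = (1/2)(√(3κ/2 + 1/2) + 1), and for every ξ with ξ_d ≤ ξ ≤ ξ₁, the contraction factor satisfies 1 − (η/ξ)·min( 2(ξ−T)/(ξ+T), 1 ) ≤ 1 − 1/( (κ/2)(√(3κ/2 + 1/2) + 1) ) < 1. -/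
/-- With `ξ₁ = κ ξ_d`, `T = ξ_d/3`, `Δ₁ = (1/2)(√((ξ₁+T)/(2T)) + 1)` and
`η = ξ_d/Δ₁`, one has `Δ₁ = (1/2)(√(3κ/2 + 1/2) + 1)`, and for every `ξ ∈ [ξ_d, ξ₁]` the
contraction factor satisfies
`1 − (η/ξ) min(2(ξ−T)/(ξ+T), 1) ≤ 1 − 1/((κ/2)(√(3κ/2 + 1/2) + 1)) < 1`. -/
theorem stmt_6 (ξd κ ξ₁ T Δ₁ η : ℝ)
    (hξd : 0 < ξd) (hκ : 1 ≤ κ)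
    (hξ₁ : ξ₁ = κ * ξd) (hT : T = ξd / 3)
    (hΔ₁ : Δ₁ = (1 / 2) * (Real.sqrt ((ξ₁ + T) / (2 * T)) + 1))
    (hη : η = ξd / Δ₁) :
    Δ₁ = (1 / 2) * (Real.sqrt (3 * κ / 2 + 1 / 2) + 1) ∧
    ∀ ξ : ℝ, ξd ≤ ξ → ξ ≤ ξ₁ →
      1 - (η / ξ) * min (2 * (ξ - T) / (ξ + T)) 1
        ≤ 1 - 1 / ((κ / 2) * (Real.sqrt (3 * κ / 2 + 1 / 2) + 1)) ∧
      1 - 1 / ((κ / 2) * (Real.sqrt (3 * κ / 2 + 1 / 2) + 1)) < 1 := by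
  have hξd' : ξd ≠ 0 := ne_of_gt hξd
  have harg : (ξ₁ + T) / (2 * T) = 3 * κ / 2 + 1 / 2 := by
    rw [hξ₁, hT]; field_simp
  have hΔeq : Δ₁ = (1 / 2) * (Real.sqrt (3 * κ / 2 + 1 / 2) + 1) := by
    rw [hΔ₁, harg]
  set s := Real.sqrt (3 * κ / 2 + 1 / 2) with hsdef
  have hs1 : 1 ≤ s := by
    have h := Real.sqrt_le_sqrt (show (1:ℝ) ≤ 3 * κ / 2 + 1 / 2 by linarith)
    rwa [Real.sqrt_one] at h
  have hA : 0 < (κ / 2) * (s + 1) := by nlinarith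
  refine ⟨hΔeq, fun ξ hξl hξu => ?_⟩
  have hξpos : 0 < ξ := lt_of_lt_of_le hξd hξl
  have hTpos : 0 < T := by rw [hT]; linarith
  have hmin : min (2 * (ξ - T) / (ξ + T)) 1 = 1 := by
    apply min_eq_right
    rw [le_div_iff₀ (by linarith : (0:ℝ) < ξ + T)]
    have : 3 * T = ξd := by rw [hT]; ring
    linarith
  constructor
  · rw [hmin, mul_one, hη, hΔeq]
    have key : 1 / ((κ / 2) * (s + 1)) ≤ ξd / ((1 / 2) * (s + 1)) / ξ := by
      rw [div_div, div_le_div_iff₀ hA (by nlinarith : (0:ℝ) < (1 / 2) * (s + 1) * ξ)]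
      have : ξ ≤ κ * ξd := by rw [← hξ₁]; exact hξu
      nlinarith
    linarith
  · have : 0 < 1 / ((κ / 2) * (s + 1)) := by positivity
    linarith
end

section
/- Let Σ be a real symmetric positive definite d×d matrix and T, β, η > 0, with K := I + TΣ⁻¹. Define Σ∞ := β(I − TΣ⁻¹)Σ(I + TΣ⁻¹). Then K⁻¹ Σ∞ K⁻¹ + 2βT·K⁻¹ = βΣ. Consequently, writing S̃∞ := βΣ for the regularized Wasserstein proximal covariance of Σ∞, one has I − ηΣ⁻¹ + ηβ·S̃∞⁻¹ = I, and therefore Σ∞ is a fixed point of the BRWP covariance recurrence Σ_{k+1} = (I − ηΣ⁻¹ + ηβ S̃_{k+1}⁻¹) Σ_k (I − ηΣ⁻¹ + ηβ S̃_{k+1}⁻¹)ᵀ, where S̃_{k+1} := K⁻¹Σ_k K⁻¹ + 2βT·K⁻¹. -/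
lemma posdef_smul {d : ℕ} {A : Matrix (Fin d) (Fin d) ℝ} (hA : A.PosDef) {c : ℝ}
    (hc : 0 < c) : (c • A).PosDef := by
  have hh : (c • A).IsHermitian := by
    show (c • A).conjTranspose = c • A
    rw [Matrix.conjTranspose_smul, hA.1.eq, star_trivial]
  refine ⟨hh, fun x hx => ?_⟩
  have := hA.2 hx
  simpa [Finsupp.mul_sum, mul_assoc, mul_left_comm] using mul_pos hc this

set_option maxHeartbeats 1000000 in
/-- With `K = I + TΣ⁻¹` and `Σ∞ = β(I − TΣ⁻¹)Σ(I + TΣ⁻¹)`, one has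
`K⁻¹ Σ∞ K⁻¹ + 2βT K⁻¹ = βΣ`; consequently `I − ηΣ⁻¹ + ηβ(βΣ)⁻¹ = I`, and `Σ∞` is a
fixed point of the BRWP covariance recurrence
`Σ_{k+1} = (I − ηΣ⁻¹ + ηβ S̃_{k+1}⁻¹) Σ_k (I − ηΣ⁻¹ + ηβ S̃_{k+1}⁻¹)ᵀ`,
where `S̃_{k+1} = K⁻¹ Σ_k K⁻¹ + 2βT K⁻¹`. -/
theorem stmt_8 (d : ℕ) (Sig : Matrix (Fin d) (Fin d) ℝ) (T β η : ℝ)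
    (hSigsymm : Sig.IsSymm) (hSigpd : Sig.PosDef)
    (hT : 0 < T) (hβ : 0 < β) (hη : 0 < η)
    (K Sinf St : Matrix (Fin d) (Fin d) ℝ)
    (hK : K = 1 + T • Sig⁻¹)
    (hSinf : Sinf = β • ((1 - T • Sig⁻¹) * Sig * (1 + T • Sig⁻¹)))
    (hSt : St = K⁻¹ * Sinf * K⁻¹ + (2 * β * T) • K⁻¹) :
    K⁻¹ * Sinf * K⁻¹ + (2 * β * T) • K⁻¹ = β • Sig ∧
    1 - η • Sig⁻¹ + (η * β) • (β • Sig)⁻¹ = 1 ∧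
    (1 - η • Sig⁻¹ + (η * β) • St⁻¹) * Sinf * (1 - η • Sig⁻¹ + (η * β) • St⁻¹).transpose = Sinf := by
  have hSdet : IsUnit Sig.det := isUnit_iff_ne_zero.mpr hSigpd.det_pos.ne'
  have hKpd : K.PosDef := by
    rw [hK]
    exact Matrix.PosDef.one.add (posdef_smul hSigpd.inv hT)
  have hKdet : IsUnit K.det := isUnit_iff_ne_zero.mpr hKpd.det_pos.ne'
  have hinvmulK : K⁻¹ * K = 1 := Matrix.nonsing_inv_mul K hKdet
  have hmulinvK : K * K⁻¹ = 1 := Matrix.mul_nonsing_inv K hKdet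
  have hinvmulS : Sig⁻¹ * Sig = 1 := Matrix.nonsing_inv_mul Sig hSdet
  -- Sinf = β • ((Sig - T • 1) * K)
  have h1 : (1 - T • Sig⁻¹) * Sig = Sig - T • (1 : Matrix (Fin d) (Fin d) ℝ) := by
    rw [sub_mul, one_mul, Matrix.smul_mul, hinvmulS]
  have hSinf' : Sinf = β • ((Sig - T • (1 : Matrix (Fin d) (Fin d) ℝ)) * K) := by
    rw [hSinf, h1, hK]
  have hKS : K * Sig = Sig + T • (1 : Matrix (Fin d) (Fin d) ℝ) := by
    rw [hK, add_mul, one_mul, Matrix.smul_mul, hinvmulS]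
  have part1 : K⁻¹ * Sinf * K⁻¹ + (2 * β * T) • K⁻¹ = β • Sig := by
    have : K⁻¹ * Sinf * K⁻¹ = β • (K⁻¹ * (Sig - T • 1)) := by
      rw [hSinf', Matrix.mul_smul, Matrix.smul_mul]
      congr 1
      rw [Matrix.mul_assoc, Matrix.mul_assoc, hmulinvK, Matrix.mul_one]
    rw [this]
    have h2 : (2 * β * T) • K⁻¹ = β • (K⁻¹ * ((2 * T) • 1)) := by
      rw [Matrix.mul_smul, Matrix.mul_one, smul_smul]
      ring_nf
    rw [h2, ← smul_add, ← Matrix.mul_add]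
    have : Sig - T • (1 : Matrix (Fin d) (Fin d) ℝ) + (2 * T) • 1 = Sig + T • 1 := by
      module
    rw [this, ← hKS, ← Matrix.mul_assoc, hinvmulK, one_mul]
  have part2 : (1 : Matrix (Fin d) (Fin d) ℝ) - η • Sig⁻¹ + (η * β) • (β • Sig)⁻¹ = 1 := by
    have : Invertible β := invertibleOfNonzero hβ.ne'
    rw [Matrix.inv_smul (A := Sig) (k := β) hSdet, invOf_eq_inv, smul_smul, mul_assoc,
      mul_inv_cancel₀ hβ.ne', mul_one, sub_add_cancel]
  refine ⟨part1, part2, ?_⟩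
  have hStβ : St = β • Sig := by rw [hSt, part1]
  have hfac : (1 : Matrix (Fin d) (Fin d) ℝ) - η • Sig⁻¹ + (η * β) • St⁻¹ = 1 := by
    rw [hStβ]; exact part2
  rw [hfac, Matrix.transpose_one, one_mul, Matrix.mul_one]
end

section
/- Let A be a Hermitian positive definite n×n complex matrix and let B be an n×n complex matrix such that Re(x* B x) > (1/2)·x* A x for every nonzero x ∈ ℂⁿ. Then B is invertible and the spectral radius of I − B⁻¹A is strictly less than 1, i.e., every (complex) eigenvalue λ of I − B⁻¹A satisfies |λ| < 1. -/
open scoped ComplexOrder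

/-- If `A` is Hermitian positive definite and `B` satisfies
`Re(x* B x) > (1/2) x* A x` for all nonzero `x ∈ ℂⁿ`, then `B` is invertible and the
spectral radius of `I − B⁻¹ A` is strictly less than 1: every complex eigenvalue `μ` of
`I − B⁻¹ A` satisfies `|μ| < 1`. -/
theorem stmt_11 (n : ℕ) (A B : Matrix (Fin n) (Fin n) ℂ)
    (hA : A.PosDef)
    (hB : ∀ x : Fin n → ℂ, x ≠ 0 →
      (1 / 2) * (dotProduct (star x) (A.mulVec x)).re
        < (dotProduct (star x) (B.mulVec x)).re) :
    IsUnit B ∧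
    ∀ μ ∈ spectrum ℂ ((1 : Matrix (Fin n) (Fin n) ℂ) - B⁻¹ * A), ‖μ‖ < 1 := by
  have hBunit : IsUnit B := by
    rw [Matrix.isUnit_iff_isUnit_det, isUnit_iff_ne_zero]
    intro hdet
    obtain ⟨v, hv, hBv⟩ := (Matrix.exists_mulVec_eq_zero_iff).mpr hdet
    have hA' : 0 < (dotProduct (star v) (A.mulVec v)).re := (Complex.lt_def.mp (hA.dotProduct_mulVec_pos hv)).1
    have hb := hB v hv
    rw [hBv] at hb
    simp only [dotProduct_zero, Complex.zero_re] at hb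
    linarith
  refine ⟨hBunit, ?_⟩
  intro μ hμ
  rw [spectrum.mem_iff, Matrix.isUnit_iff_isUnit_det, isUnit_iff_ne_zero, not_not,
    ← Matrix.exists_mulVec_eq_zero_iff] at hμ
  obtain ⟨v, hv, hveq⟩ := hμ
  have hdetB : IsUnit B.det := (Matrix.isUnit_iff_isUnit_det B).mp hBunit
  have h1 : (B⁻¹ * A).mulVec v = (1 - μ) • v := by
    rw [Matrix.sub_mulVec, Algebra.algebraMap_eq_smul_one, Matrix.smul_mulVec,
      Matrix.one_mulVec, Matrix.sub_mulVec, Matrix.one_mulVec, sub_eq_zero] at hveq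
    funext i
    have h := congrFun hveq i
    simp only [Pi.add_apply, Pi.smul_apply, Pi.sub_apply, smul_eq_mul] at h ⊢
    linear_combination h
  have key : A.mulVec v = (1 - μ) • B.mulVec v := by
    calc A.mulVec v = ((B * B⁻¹) * A).mulVec v := by
          rw [Matrix.mul_nonsing_inv _ hdetB, one_mul]
      _ = B.mulVec ((B⁻¹ * A).mulVec v) := by rw [Matrix.mulVec_mulVec, mul_assoc]
      _ = (1 - μ) • B.mulVec v := by rw [h1, Matrix.mulVec_smul]
  set a := dotProduct (star v) (A.mulVec v) with ha
  set b := dotProduct (star v) (B.mulVec v) with hbdef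
  have hdot : a = (1 - μ) * b := by
    rw [ha, key, dotProduct_smul, smul_eq_mul]
  have hA' := Complex.lt_def.mp (hA.dotProduct_mulVec_pos hv)
  have har : 0 < a.re := hA'.1
  have haim : a.im = 0 := hA'.2.symm
  set w : ℂ := 1 - μ with hwdef
  have hw : w ≠ 0 := by
    intro h
    rw [h, zero_mul] at hdot
    rw [hdot] at har
    simp at har
  have hareal : a = (a.re : ℂ) := by
    rw [Complex.ext_iff]
    constructor <;> simp [haim]
  have hbval : b = (a.re : ℂ) * w⁻¹ := by
    rw [eq_mul_inv_iff_mul_eq₀ hw, mul_comm b w, ← hareal]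
    exact hdot.symm
  have hnsq : 0 < Complex.normSq w := Complex.normSq_pos.mpr hw
  have hbre : b.re = a.re * (w.re / Complex.normSq w) := by
    rw [hbval, Complex.re_ofReal_mul, Complex.inv_re]
  have hineq := hB v hv
  rw [← ha, ← hbdef, hbre] at hineq
  have h2 : Complex.normSq w < 2 * w.re := by
    rw [mul_div_assoc'] at hineq
    rw [lt_div_iff₀ hnsq] at hineq
    nlinarith
  have hwre : w.re = 1 - μ.re := by simp [hwdef]
  have hwim : w.im = -μ.im := by simp [hwdef]
  have hnormsq : Complex.normSq w = w.re ^ 2 + w.im ^ 2 := by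
    rw [Complex.normSq_apply]; ring
  have h3 : μ.re ^ 2 + μ.im ^ 2 < 1 := by
    rw [hnormsq, hwre, hwim] at h2
    nlinarith
  have h4 : (‖μ‖) ^ 2 = μ.re ^ 2 + μ.im ^ 2 := by
    rw [Complex.sq_norm, Complex.normSq_apply]; ring
  nlinarith [norm_nonneg μ]
end

section
/- Let Σ and S be real symmetric positive definite d×d matrices, T, β > 0, K := I + TΣ⁻¹, and S̃ := K⁻¹ S K⁻¹ + 2βT·K⁻¹. Then S̃ is invertible and every eigenvalue λ ∈ ℂ of the matrix I − 4βT·S̃⁻¹K⁻¹ satisfies |λ| < 1; equivalently, the spectral radius of (1/(4βT))·I − S̃⁻¹K⁻¹ is strictly less than 1/(4βT). -/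
open Matrix

section helpers
variable {n : Type*} [Fintype n] [DecidableEq n]

omit [DecidableEq n] in
lemma myPosDef_smul {A : Matrix n n ℝ} (hA : A.PosDef) {c : ℝ} (hc : 0 < c) :
    (c • A).PosDef := by
  exact hA.smul hc

lemma myPosDef_conj {A B : Matrix n n ℝ} (hA : A.PosDef) (hB : IsUnit B) :
    (Bᴴ * A * B).PosDef := by
  exact hA.conjTranspose_mul_mul_same (Matrix.mulVec_injective_iff_isUnit.mpr hB)

lemma mySpectrum_map {W : Matrix n n ℝ} (hW : W.IsHermitian) :
    spectrum ℂ (W.map Complex.ofReal) = Set.range (fun i => (hW.eigenvalues i : ℂ)) := by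
  have hsp := hW.spectral_theorem
  set U : Matrix n n ℝ := (Matrix.IsHermitian.eigenvectorUnitary hW : Matrix n n ℝ) with hUdef
  have hU1 : star U * U = 1 := (Unitary.mem_iff.mp (Matrix.IsHermitian.eigenvectorUnitary hW).2).1
  have hU2 : U * star U = 1 := (Unitary.mem_iff.mp (Matrix.IsHermitian.eigenvectorUnitary hW).2).2
  set f : ℝ →+* ℂ := Complex.ofRealHom with hf
  have hmap1 : (1 : Matrix n n ℝ).map f = 1 := Matrix.map_one f (map_zero f) (map_one f)
  have h1 : U.map f * (star U).map f = 1 := by rw [← Matrix.map_mul, hU2, hmap1]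
  have h2 : (star U).map f * U.map f = 1 := by rw [← Matrix.map_mul, hU1, hmap1]
  set u : (Matrix n n ℂ)ˣ := ⟨U.map f, (star U).map f, h1, h2⟩ with hu
  have hWmap : W.map Complex.ofReal =
      (u : Matrix n n ℂ) * (diagonal (fun i => (hW.eigenvalues i : ℂ))) *
        ((u⁻¹ : (Matrix n n ℂ)ˣ) : Matrix n n ℂ) := by
    show W.map f = U.map f * _ * (star U).map f
    conv_lhs => rw [hsp, Unitary.conjStarAlgAut_apply]
    rw [Matrix.map_mul, Matrix.map_mul, diagonal_map (map_zero f)]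
    congr 2
  rw [hWmap, spectrum.units_conjugate, spectrum_diagonal]

/-- spectrum bound for eigenvalue-type arguments -/
lemma mySpec_pos {C : Matrix n n ℝ} (hC : C.PosDef) {t : ℝ} (ht : t ∈ spectrum ℝ C) :
    0 < t := by
  rw [Matrix.IsHermitian.spectrum_real_eq_range_eigenvalues hC.1] at ht
  obtain ⟨i, rfl⟩ := ht
  exact hC.eigenvalues_pos i

end helpers

/-- With `K = I + TΣ⁻¹` and `S̃ = K⁻¹ S K⁻¹ + 2βT K⁻¹` (S symmetric positive
definite), `S̃` is invertible and every complex eigenvalue `μ` of `I − 4βT S̃⁻¹ K⁻¹`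
satisfies `|μ| < 1`; equivalently, the spectral radius of `(1/(4βT)) I − S̃⁻¹ K⁻¹` is
strictly less than `1/(4βT)`. -/
theorem stmt_12 (d : ℕ) (Sig S : Matrix (Fin d) (Fin d) ℝ) (T β : ℝ)
    (hSigsymm : Sig.IsSymm) (hSigpd : Sig.PosDef)
    (hSsymm : S.IsSymm) (hSpd : S.PosDef)
    (hT : 0 < T) (hβ : 0 < β)
    (K St : Matrix (Fin d) (Fin d) ℝ)
    (hK : K = 1 + T • Sig⁻¹)
    (hSt : St = K⁻¹ * S * K⁻¹ + (2 * β * T) • K⁻¹) :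
    IsUnit St ∧
    (∀ μ ∈ spectrum ℂ
        (((1 : Matrix (Fin d) (Fin d) ℝ) - (4 * β * T) • (St⁻¹ * K⁻¹)).map
          (Complex.ofReal)),
      ‖μ‖ < 1) ∧
    (∀ μ ∈ spectrum ℂ
        (((1 / (4 * β * T)) • (1 : Matrix (Fin d) (Fin d) ℝ) - St⁻¹ * K⁻¹).map
          (Complex.ofReal)),
      ‖μ‖ < 1 / (4 * β * T)) := by
  have hc : (0:ℝ) < 4 * β * T := by positivity
  have hKpd : K.PosDef := by
    rw [hK]; exact Matrix.PosDef.add Matrix.PosDef.one (myPosDef_smul hSigpd.inv hT)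
  have hKi : K⁻¹.PosDef := hKpd.inv
  have hMid : (K⁻¹ * S * K⁻¹).PosDef := by
    have := myPosDef_conj hSpd hKi.isUnit
    rwa [hKi.1.eq] at this
  have hStpd : St.PosDef := by
    rw [hSt]; exact hMid.add (myPosDef_smul hKi (by positivity))
  have hStU : IsUnit St := hStpd.isUnit
  -- square root of St
  obtain ⟨Q, hQherm, hQQ⟩ : ∃ Q : Matrix (Fin d) (Fin d) ℝ, Q.IsHermitian ∧ Q * Q = St :=
    open MatrixOrder in
    ⟨CFC.sqrt St, (CFC.sqrt_nonneg St).posSemidef.1, CFC.sqrt_mul_sqrt_self St hStpd.posSemidef.nonneg⟩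
  have hQU : IsUnit Q := by
    have hdet : Q.det * Q.det = St.det := by rw [← Matrix.det_mul, hQQ]
    have hdQ : Q.det ≠ 0 := by
      intro h
      rw [h, mul_zero] at hdet
      exact hStpd.det_pos.ne' hdet.symm
    exact (Matrix.isUnit_iff_isUnit_det Q).2 (isUnit_iff_ne_zero.2 hdQ)
  have hQiU : IsUnit Q⁻¹ := Matrix.isUnit_nonsing_inv_iff.2 hQU
  have hQQi : Q * Q⁻¹ = 1 := Matrix.mul_nonsing_inv Q ((Matrix.isUnit_iff_isUnit_det Q).1 hQU)
  have hQiQ : Q⁻¹ * Q = 1 := Matrix.nonsing_inv_mul Q ((Matrix.isUnit_iff_isUnit_det Q).1 hQU)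
  have hStinv : St⁻¹ = Q⁻¹ * Q⁻¹ := by rw [← hQQ, Matrix.mul_inv_rev]
  set B' : Matrix (Fin d) (Fin d) ℝ := (4 * β * T) • K⁻¹ with hB'def
  have hB'pd : B'.PosDef := myPosDef_smul hKi hc
  set C : Matrix (Fin d) (Fin d) ℝ := Q⁻¹ * B' * Q⁻¹ with hCdef
  have hCpd : C.PosDef := by
    have := myPosDef_conj hB'pd hQiU
    rwa [hQherm.inv.eq] at this
  set M₁ : Matrix (Fin d) (Fin d) ℝ :=
    (1 : Matrix (Fin d) (Fin d) ℝ) - (4 * β * T) • (St⁻¹ * K⁻¹) with hM₁def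
  have hsmulmul : (4 * β * T) • (St⁻¹ * K⁻¹) = St⁻¹ * B' := by
    rw [hB'def, Matrix.mul_smul]
  have claim1 : Q * M₁ * Q⁻¹ = 1 - C := by
    rw [hM₁def, hsmulmul, Matrix.mul_sub, Matrix.sub_mul, Matrix.mul_one, hQQi, hStinv]
    congr 1
    calc Q * (Q⁻¹ * Q⁻¹ * B') * Q⁻¹ = (Q * Q⁻¹) * (Q⁻¹ * B' * Q⁻¹) := by
          simp only [Matrix.mul_assoc]
      _ = C := by rw [hQQi, Matrix.one_mul]
  have hM₁eq : M₁ = Q⁻¹ * (1 - C) * Q := by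
    rw [← claim1]
    symm
    calc Q⁻¹ * (Q * M₁ * Q⁻¹) * Q = (Q⁻¹ * Q) * M₁ * (Q⁻¹ * Q) := by
          simp only [Matrix.mul_assoc]
      _ = M₁ := by rw [hQiQ, Matrix.one_mul, Matrix.mul_one]
  set W : Matrix (Fin d) (Fin d) ℝ := 1 - C with hWdef
  have hWherm : W.IsHermitian := Matrix.isHermitian_one.sub hCpd.1
  have h2st : (2:ℝ) • (K⁻¹ * S * K⁻¹) = (2:ℝ) • St - B' := by
    rw [hSt, hB'def]; module
  have hE : (2:ℝ) • (1 : Matrix (Fin d) (Fin d) ℝ) - C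
      = Q⁻¹ * ((2:ℝ) • (K⁻¹ * S * K⁻¹)) * Q⁻¹ := by
    rw [h2st, Matrix.mul_sub, Matrix.sub_mul]
    congr 1
    rw [Matrix.mul_smul, Matrix.smul_mul, ← hQQ]
    congr 1
    symm
    calc Q⁻¹ * (Q * Q) * Q⁻¹ = (Q⁻¹ * Q) * (Q * Q⁻¹) := by simp only [Matrix.mul_assoc]
      _ = 1 := by rw [hQiQ, hQQi, Matrix.one_mul]
  have hEpd : ((2:ℝ) • (1 : Matrix (Fin d) (Fin d) ℝ) - C).PosDef := by
    rw [hE]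
    have := myPosDef_conj (myPosDef_smul (c := (2:ℝ)) hMid two_pos) hQiU
    rwa [hQherm.inv.eq] at this
  have hCbound : ∀ t ∈ spectrum ℝ C, 0 < t ∧ t < 2 := by
    intro t ht
    refine ⟨mySpec_pos hCpd ht, ?_⟩
    have h2 : (2:ℝ) - t ∈ spectrum ℝ ((algebraMap ℝ (Matrix (Fin d) (Fin d) ℝ)) 2 - C) := by
      rw [← spectrum.singleton_sub_eq]
      exact Set.sub_mem_sub rfl ht
    have halg : (algebraMap ℝ (Matrix (Fin d) (Fin d) ℝ)) 2
        = (2:ℝ) • (1 : Matrix (Fin d) (Fin d) ℝ) := Algebra.algebraMap_eq_smul_one 2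
    rw [halg] at h2
    have := mySpec_pos hEpd h2
    linarith
  have hWev : ∀ i, |hWherm.eigenvalues i| < 1 := by
    intro i
    have hmem : hWherm.eigenvalues i ∈ spectrum ℝ W := hWherm.eigenvalues_mem_spectrum_real i
    have h1 : hWherm.eigenvalues i
        ∈ spectrum ℝ ((algebraMap ℝ (Matrix (Fin d) (Fin d) ℝ)) 1 - C) := by
      rw [_root_.map_one]
      exact hmem
    rw [← spectrum.singleton_sub_eq] at h1
    obtain ⟨a, ha, t, ht, hat⟩ := h1
    obtain rfl : a = 1 := ha
    obtain ⟨ht0, ht2⟩ := hCbound t ht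
    have hat' : (1:ℝ) - t = hWherm.eigenvalues i := hat
    rw [← hat', abs_lt]
    constructor <;> linarith
  set f : ℝ →+* ℂ := Complex.ofRealHom with hf
  have hv1 : Q.map f * Q⁻¹.map f = 1 := by
    rw [← Matrix.map_mul, hQQi]; exact Matrix.map_one f (map_zero f) (map_one f)
  have hv2 : Q⁻¹.map f * Q.map f = 1 := by
    rw [← Matrix.map_mul, hQiQ]; exact Matrix.map_one f (map_zero f) (map_one f)
  set v : (Matrix (Fin d) (Fin d) ℂ)ˣ := ⟨Q.map f, Q⁻¹.map f, hv1, hv2⟩ with hv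
  have hM₁map : M₁.map Complex.ofReal
      = ((v⁻¹ : (Matrix (Fin d) (Fin d) ℂ)ˣ) : Matrix (Fin d) (Fin d) ℂ)
        * (W.map Complex.ofReal) * (v : Matrix (Fin d) (Fin d) ℂ) := by
    show M₁.map f = Q⁻¹.map f * W.map f * Q.map f
    rw [hM₁eq, Matrix.map_mul, Matrix.map_mul]
  have hspecM₁ : spectrum ℂ (M₁.map Complex.ofReal) = spectrum ℂ (W.map Complex.ofReal) := by
    rw [hM₁map, spectrum.units_conjugate']
  have parta : ∀ μ ∈ spectrum ℂ (M₁.map Complex.ofReal), ‖μ‖ < 1 := by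
    intro μ hμ
    rw [hspecM₁, mySpectrum_map hWherm] at hμ
    obtain ⟨i, rfl⟩ := hμ
    rw [Complex.norm_real, Real.norm_eq_abs]
    exact hWev i
  refine ⟨hStU, parta, ?_⟩
  set r : ℝ := 1 / (4 * β * T) with hr
  have hrpos : 0 < r := by positivity
  have hM₂eq : r • (1 : Matrix (Fin d) (Fin d) ℝ) - St⁻¹ * K⁻¹ = r • M₁ := by
    rw [hM₁def, smul_sub, smul_smul, hr, one_div, inv_mul_cancel₀ hc.ne', one_smul]
  have hmapsmul : (r • M₁).map Complex.ofReal = (r : ℂ) • (M₁.map Complex.ofReal) := by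
    ext i j
    simp [Matrix.map_apply]
  intro μ hμ
  rw [hM₂eq, hmapsmul] at hμ
  have hru : ((r : ℂ)) ≠ 0 := Complex.ofReal_ne_zero.2 hrpos.ne'
  have hsm := spectrum.unit_smul_eq_smul (M₁.map Complex.ofReal) (Units.mk0 (r:ℂ) hru)
  rw [show ((Units.mk0 (r:ℂ) hru : ℂˣ) • (M₁.map Complex.ofReal)) = (r:ℂ) • (M₁.map Complex.ofReal) from rfl] at hsm
  rw [hsm] at hμ
  obtain ⟨ν, hν, rfl⟩ := hμ
  show ‖(((Units.mk0 (r:ℂ) hru : ℂˣ) : ℂ) • ν)‖ < r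
  rw [smul_eq_mul, norm_mul]
  have habs : ‖((Units.mk0 (r:ℂ) hru : ℂˣ) : ℂ)‖ = r := by
    simp [abs_of_pos hrpos]
  rw [habs]
  calc r * ‖ν‖ < r * 1 := mul_lt_mul_of_pos_left (parta ν hν) hrpos
    _ = r := mul_one r
end

section
/- Let d ≥ 1, let Σ and Σ_k be real symmetric positive definite d×d matrices, μ_k ∈ ℝ^d, β, T > 0. Define V(z) = (1/2)zᵀΣ⁻¹z, the kernel K(x,y) := exp(−(1/(2β))(V(x) + ‖x−y‖²/(2T))) / ∫_{ℝ^d} exp(−(1/(2β))(V(z) + ‖z−y‖²/(2T))) dz, and let φ_{μ,C}(x) = (2π)^{−d/2}(det C)^{−1/2} exp(−(1/2)(x−μ)ᵀC⁻¹(x−μ)) denote the Gaussian density with mean μ and covariance C. Then for every x ∈ ℝ^d, ∫_{ℝ^d} K(x,y)·φ_{μ_k,Σ_k}(y) dy = φ_{μ̃,S̃}(x), where μ̃ = (I + TΣ⁻¹)⁻¹μ_k and S̃ = 2βT(I + TΣ⁻¹)⁻¹ + (I + TΣ⁻¹)⁻¹Σ_k(I + TΣ⁻¹)⁻¹ (a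 symmetric positive definite matrix). -/
open MeasureTheory Real Matrix

namespace Stmt14Aux

lemma herm_of_symm {d : ℕ} {M : Matrix (Fin d) (Fin d) ℝ} (h : M.IsSymm) : M.IsHermitian := by
  rw [Matrix.IsHermitian, Matrix.conjTranspose]
  rw [Matrix.IsSymm] at h
  ext i j; simpa using congrFun (congrFun h i) j

lemma symm_of_herm {d : ℕ} {M : Matrix (Fin d) (Fin d) ℝ} (h : M.IsHermitian) : M.IsSymm := by
  rw [Matrix.IsHermitian, Matrix.conjTranspose] at h
  rw [Matrix.IsSymm]; ext i j; simpa using congrFun (congrFun h i) j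

lemma dot_symm {d : ℕ} {M : Matrix (Fin d) (Fin d) ℝ} (h : M.IsSymm) (x y : Fin d → ℝ) :
    x ⬝ᵥ M.mulVec y = y ⬝ᵥ M.mulVec x := by
  rw [Matrix.dotProduct_mulVec, ← Matrix.mulVec_transpose, h.eq, dotProduct_comm]

lemma pd_dot {d : ℕ} {M : Matrix (Fin d) (Fin d) ℝ} (hM : M.PosDef) {x : Fin d → ℝ}
    (hx : x ≠ 0) : 0 < x ⬝ᵥ M.mulVec x := by
  simpa using hM.dotProduct_mulVec_pos hx

lemma posDef_of_pos {d : ℕ} {M : Matrix (Fin d) (Fin d) ℝ} (h : M.IsSymm)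
    (hp : ∀ x : Fin d → ℝ, x ≠ 0 → 0 < x ⬝ᵥ M.mulVec x) : M.PosDef := by
  refine Matrix.PosDef.of_dotProduct_mulVec_pos (herm_of_symm h) (fun x hx => ?_)
  simpa using hp x hx

lemma inv_symm {d : ℕ} {M : Matrix (Fin d) (Fin d) ℝ} (h : M.IsSymm) : (M⁻¹).IsSymm := by
  rw [Matrix.IsSymm, Matrix.transpose_nonsing_inv, h.eq]

lemma gauss_std (d : ℕ) : ∫ u : Fin d → ℝ, rexp (-(1/2) * (u ⬝ᵥ u)) = Real.sqrt ((2*π)^d) := by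
  have h1 : ∀ u : Fin d → ℝ, rexp (-(1/2) * (u ⬝ᵥ u)) = ∏ i, rexp (-(1/2) * (u i)^2) := by
    intro u
    rw [← Real.exp_sum]
    congr 1
    rw [dotProduct, Finset.mul_sum]
    congr 1; ext i; ring
  simp_rw [h1]
  rw [integral_fintype_prod_volume_eq_prod (f := fun (_ : Fin d) (v : ℝ) => rexp (-(1/2) * v^2))]
  have h2 : ∫ v : ℝ, rexp (-(1/2) * v^2) = Real.sqrt (2*π) := by
    have := integral_gaussian (1/2)
    rw [this, show π / (1/2 : ℝ) = 2 * π by ring]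
  rw [Finset.prod_congr rfl (fun i _ => h2), Finset.prod_const, Finset.card_univ,
    Fintype.card_fin]
  rw [← Real.sqrt_sq (by positivity : (0:ℝ) ≤ √(2*π) ^ d)]
  congr 1
  rw [← pow_mul, mul_comm d 2, pow_mul, Real.sq_sqrt (by positivity)]

open scoped MatrixOrder in
lemma gauss_quad {d : ℕ} {M : Matrix (Fin d) (Fin d) ℝ} (hM : M.PosDef) :
    ∫ x : Fin d → ℝ, rexp (-(1/2) * (x ⬝ᵥ M.mulVec x)) = Real.sqrt ((2*π)^d / M.det) := by
  set S := CFC.sqrt M with hSdef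
  have hS2 : S * S = M := CFC.sqrt_mul_sqrt_self M hM.posSemidef.nonneg
  have hSsymm : S.IsSymm := symm_of_herm (Matrix.nonneg_iff_posSemidef.mp (CFC.sqrt_nonneg M)).1
  have hdet2 : S.det * S.det = M.det := by rw [← Matrix.det_mul, hS2]
  have hdet_nonneg : 0 ≤ S.det := by
    have hps := Matrix.nonneg_iff_posSemidef.mp (CFC.sqrt_nonneg M)
    rw [hps.1.det_eq_prod_eigenvalues]
    exact Finset.prod_nonneg (fun i _ => hps.eigenvalues_nonneg i)
  have hMdet : 0 < M.det := hM.det_pos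
  have hdet_pos : 0 < S.det := by
    rcases lt_or_eq_of_le hdet_nonneg with h | h
    · exact h
    · exfalso; rw [← h] at hdet2; simp at hdet2; linarith
  have hform : ∀ x : Fin d → ℝ, x ⬝ᵥ M.mulVec x = (S.mulVec x) ⬝ᵥ (S.mulVec x) := by
    intro x
    rw [← hS2, ← Matrix.mulVec_mulVec, dot_symm hSsymm]
  simp_rw [hform]
  have hmap : Measure.map (Matrix.toLin' S) volume
      = ENNReal.ofReal |S.det⁻¹| • volume :=
    Real.map_matrix_volume_pi_eq_smul_volume_pi (ne_of_gt hdet_pos)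
  have hcont : Continuous (fun u : Fin d → ℝ => rexp (-(1/2) * (u ⬝ᵥ u))) := by
    apply Real.continuous_exp.comp
    apply Continuous.mul continuous_const
    unfold dotProduct
    exact continuous_finset_sum _ (fun i _ => ((continuous_apply i).mul (continuous_apply i)))
  calc ∫ x : Fin d → ℝ, rexp (-(1/2) * (S.mulVec x ⬝ᵥ S.mulVec x))
      = ∫ u, rexp (-(1/2) * (u ⬝ᵥ u)) ∂(Measure.map (Matrix.toLin' S) volume) := by
        rw [integral_map]
        · simp_rw [Matrix.toLin'_apply]
        · exact (Matrix.toLin' S).continuous_of_finiteDimensional.aemeasurable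
        · exact hcont.aestronglyMeasurable
    _ = |S.det⁻¹| * ∫ u : Fin d → ℝ, rexp (-(1/2) * (u ⬝ᵥ u)) := by
        rw [hmap, integral_smul_measure, ENNReal.toReal_ofReal (abs_nonneg _), smul_eq_mul]
    _ = Real.sqrt ((2*π)^d / M.det) := by
        rw [gauss_std, abs_of_pos (by positivity), ← hdet2]
        rw [Real.sqrt_div (by positivity), Real.sqrt_mul_self hdet_nonneg]
        ring

lemma gauss_full {d : ℕ} {M : Matrix (Fin d) (Fin d) ℝ} (hM : M.PosDef)
    (b : Fin d → ℝ) (k : ℝ) :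
    ∫ x : Fin d → ℝ, rexp (-(1/2) * (x ⬝ᵥ M.mulVec x) + b ⬝ᵥ x + k)
      = Real.sqrt ((2*π)^d / M.det) * rexp ((1/2) * (b ⬝ᵥ M⁻¹.mulVec b) + k) := by
  have hMsymm : M.IsSymm := symm_of_herm hM.1
  have hMinv : M * M⁻¹ = 1 := Matrix.mul_nonsing_inv M (isUnit_iff_ne_zero.mpr hM.det_pos.ne')
  set m : Fin d → ℝ := M⁻¹.mulVec b with hm
  have hMm : M.mulVec m = b := by
    rw [hm, Matrix.mulVec_mulVec, hMinv, Matrix.one_mulVec]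
  have key : ∀ x : Fin d → ℝ, -(1/2) * (x ⬝ᵥ M.mulVec x) + b ⬝ᵥ x + k
      = -(1/2) * ((x - m) ⬝ᵥ M.mulVec (x - m)) + ((1/2) * (b ⬝ᵥ M⁻¹.mulVec b) + k) := by
    intro x
    have e1 : (x - m) ⬝ᵥ M.mulVec (x - m)
        = x ⬝ᵥ M.mulVec x - x ⬝ᵥ M.mulVec m - m ⬝ᵥ M.mulVec x + m ⬝ᵥ M.mulVec m := by
      rw [Matrix.mulVec_sub, dotProduct_sub, sub_dotProduct,
        sub_dotProduct]
      ring
    have e2 : x ⬝ᵥ M.mulVec m = b ⬝ᵥ x := by rw [hMm, dotProduct_comm]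
    have e3 : m ⬝ᵥ M.mulVec x = b ⬝ᵥ x := by rw [dot_symm hMsymm, e2]
    have e4 : m ⬝ᵥ M.mulVec m = b ⬝ᵥ M⁻¹.mulVec b := by
      rw [dot_symm hMsymm, hMm, hm, dotProduct_comm]
    rw [e1, e2, e3, e4]; ring
  simp_rw [key, Real.exp_add]
  rw [MeasureTheory.integral_mul_const]
  congr 1
  rw [integral_sub_right_eq_self (fun x : Fin d → ℝ => rexp (-(1/2) * (x ⬝ᵥ M.mulVec x))) m]
  exact gauss_quad hM

end Stmt14Aux
set_option maxHeartbeats 2000000 in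
/-- The regularized Wasserstein proximal of a Gaussian `N(μ_k, Σ_k)` under the
quadratic potential `V(z) = (1/2) zᵀΣ⁻¹z` is the Gaussian with mean
`μ̃ = (I + TΣ⁻¹)⁻¹μ_k` and covariance
`S̃ = 2βT(I + TΣ⁻¹)⁻¹ + (I + TΣ⁻¹)⁻¹ Σ_k (I + TΣ⁻¹)⁻¹` (symmetric positive definite):
`∫ K(x,y) φ_{μ_k,Σ_k}(y) dy = φ_{μ̃,S̃}(x)`. -/
theorem stmt_14 (d : ℕ) (hd : 1 ≤ d) (Sig Sigk : Matrix (Fin d) (Fin d) ℝ)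
    (hSigsymm : Sig.IsSymm) (hSigpd : Sig.PosDef)
    (hSigksymm : Sigk.IsSymm) (hSigkpd : Sigk.PosDef)
    (μk : Fin d → ℝ) (β T : ℝ) (hβ : 0 < β) (hT : 0 < T)
    (V : (Fin d → ℝ) → ℝ)
    (hV : ∀ z, V z = (1 / 2) * dotProduct z (Sig⁻¹.mulVec z))
    (Kker : (Fin d → ℝ) → (Fin d → ℝ) → ℝ)
    (hKker : ∀ x y, Kker x y =
      Real.exp (-(1 / (2 * β)) * (V x + dotProduct (x - y) (x - y) / (2 * T)))
      / ∫ z : Fin d → ℝ,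
          Real.exp (-(1 / (2 * β)) * (V z + dotProduct (z - y) (z - y) / (2 * T))))
    (φ : (Fin d → ℝ) → Matrix (Fin d) (Fin d) ℝ → (Fin d → ℝ) → ℝ)
    (hφ : ∀ μ C x, φ μ C x
      = (2 * Real.pi) ^ (-(d : ℝ) / 2) * (Matrix.det C) ^ (-(1 / 2) : ℝ)
        * Real.exp (-(1 / 2) * dotProduct (x - μ) (C⁻¹.mulVec (x - μ))))
    (μt : Fin d → ℝ) (hμt : μt = (1 + T • Sig⁻¹)⁻¹.mulVec μk)
    (St : Matrix (Fin d) (Fin d) ℝ)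
    (hSt : St = (2 * β * T) • (1 + T • Sig⁻¹)⁻¹
      + (1 + T • Sig⁻¹)⁻¹ * Sigk * (1 + T • Sig⁻¹)⁻¹) :
    St.IsSymm ∧ St.PosDef ∧
    ∀ x : Fin d → ℝ, (∫ y : Fin d → ℝ, Kker x y * φ μk Sigk y) = φ μt St x := by
  open Stmt14Aux in
  have hπ : (0:ℝ) < π := Real.pi_pos
  -- basic vector positivity
  have hvv : ∀ v : Fin d → ℝ, v ≠ 0 → 0 < v ⬝ᵥ v := by
    intro v hv
    obtain ⟨i, hi⟩ := Function.ne_iff.mp hv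
    exact Finset.sum_pos' (fun j _ => mul_self_nonneg (v j))
      ⟨i, Finset.mem_univ i, mul_self_pos.mpr hi⟩
  set A := Sig⁻¹ with hAdef
  have hApd : A.PosDef := hSigpd.inv
  have hAsymm : A.IsSymm := inv_symm hSigsymm
  set r : ℝ := 1/(2*β*T) with hrdef
  have hr : 0 < r := by rw [hrdef]; positivity
  set P : Matrix (Fin d) (Fin d) ℝ := 1 + T • A with hPdef
  have hPsymm : P.IsSymm := by
    rw [hPdef, Matrix.IsSymm, Matrix.transpose_add, Matrix.transpose_smul,
      Matrix.transpose_one, hAsymm.eq]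
  have hPdot : ∀ v : Fin d → ℝ, v ⬝ᵥ P.mulVec v = v ⬝ᵥ v + T * (v ⬝ᵥ A.mulVec v) := by
    intro v
    rw [hPdef, Matrix.add_mulVec, Matrix.one_mulVec, Matrix.smul_mulVec,
      dotProduct_add, dotProduct_smul, smul_eq_mul]
  have hPpd : P.PosDef := by
    refine posDef_of_pos hPsymm (fun v hv => ?_)
    rw [hPdot]
    have h1 := hvv v hv
    have h2 := pd_dot hApd hv
    nlinarith
  set M : Matrix (Fin d) (Fin d) ℝ := r • P with hMdef
  have hMsymm : M.IsSymm := by rw [hMdef, Matrix.IsSymm, Matrix.transpose_smul, hPsymm.eq]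
  have hMdot : ∀ v : Fin d → ℝ, v ⬝ᵥ M.mulVec v = r * (v ⬝ᵥ v) + (r*T) * (v ⬝ᵥ A.mulVec v) := by
    intro v
    rw [hMdef, Matrix.smul_mulVec, dotProduct_smul, smul_eq_mul, hPdot]
    ring
  have hMpd : M.PosDef := by
    refine posDef_of_pos hMsymm (fun v hv => ?_)
    rw [hMdot]
    have h1 := mul_pos hr (hvv v hv)
    have h2 := mul_pos (mul_pos hr hT) (pd_dot hApd hv)
    linarith
  have hMM : M * M⁻¹ = 1 := Matrix.mul_nonsing_inv M (isUnit_iff_ne_zero.mpr hMpd.det_pos.ne')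
  have hMM' : M⁻¹ * M = 1 := Matrix.nonsing_inv_mul M (isUnit_iff_ne_zero.mpr hMpd.det_pos.ne')
  have hSk : Sigk * Sigk⁻¹ = 1 :=
    Matrix.mul_nonsing_inv Sigk (isUnit_iff_ne_zero.mpr hSigkpd.det_pos.ne')
  have hSk' : Sigk⁻¹ * Sigk = 1 :=
    Matrix.nonsing_inv_mul Sigk (isUnit_iff_ne_zero.mpr hSigkpd.det_pos.ne')
  have hMinvpd : (M⁻¹).PosDef := hMpd.inv
  have hMinvsymm : (M⁻¹).IsSymm := inv_symm hMsymm
  have hSkinvpd : (Sigk⁻¹).PosDef := hSigkpd.inv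
  have hSkinvsymm : (Sigk⁻¹).IsSymm := inv_symm hSigksymm
  set N : Matrix (Fin d) (Fin d) ℝ := (r*r) • M⁻¹ + Sigk⁻¹ with hNdef
  have hNsymm : N.IsSymm := by
    rw [hNdef, Matrix.IsSymm, Matrix.transpose_add, Matrix.transpose_smul,
      hMinvsymm.eq, hSkinvsymm.eq]
  have hNpd : N.PosDef := by
    refine posDef_of_pos hNsymm (fun v hv => ?_)
    rw [hNdef, Matrix.add_mulVec, Matrix.smul_mulVec, dotProduct_add,
      dotProduct_smul, smul_eq_mul]
    have h1 := mul_pos (mul_pos hr hr) (pd_dot hMinvpd hv)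
    have h2 := pd_dot hSkinvpd hv
    linarith
  have hNN : N * N⁻¹ = 1 := Matrix.mul_nonsing_inv N (isUnit_iff_ne_zero.mpr hNpd.det_pos.ne')
  have hNN' : N⁻¹ * N = 1 := Matrix.nonsing_inv_mul N (isUnit_iff_ne_zero.mpr hNpd.det_pos.ne')
  have hNinvsymm : (N⁻¹).IsSymm := inv_symm hNsymm
  -- P⁻¹ = r • M⁻¹
  have hPinv : P⁻¹ = r • M⁻¹ := by
    apply Matrix.inv_eq_right_inv
    rw [mul_smul_comm, ← smul_mul_assoc, ← hMdef, hMM]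
  -- St in terms of M and N
  have hSt'' : St = M⁻¹ + (r*r) • (M⁻¹ * Sigk * M⁻¹) := by
    rw [hSt, hPinv, smul_smul, smul_mul_assoc, mul_smul_comm, smul_mul_assoc, smul_smul]
    have : 2 * β * T * r = 1 := by rw [hrdef]; field_simp
    rw [this, one_smul]
  have hSt' : St = M⁻¹ * Sigk * N := by
    rw [hSt'', hNdef, Matrix.mul_add, mul_smul_comm,
      Matrix.mul_assoc M⁻¹ Sigk Sigk⁻¹, hSk, Matrix.mul_one]
    rw [add_comm]
  have hStinv : St⁻¹ = N⁻¹ * (Sigk⁻¹ * M) := by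
    apply Matrix.inv_eq_right_inv
    rw [hSt', Matrix.mul_assoc (M⁻¹ * Sigk) N (N⁻¹ * (Sigk⁻¹ * M)),
      ← Matrix.mul_assoc N N⁻¹ (Sigk⁻¹ * M), hNN, Matrix.one_mul,
      Matrix.mul_assoc M⁻¹ Sigk (Sigk⁻¹ * M), ← Matrix.mul_assoc Sigk Sigk⁻¹ M,
      hSk, Matrix.one_mul, hMM']
  have hSkinv_eq : (r*r) • M⁻¹ = N - Sigk⁻¹ := by rw [hNdef, add_sub_cancel_right]
  have hW : St⁻¹ = M - (r*r) • N⁻¹ := by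
    have h1 : Sigk⁻¹ = N - (r*r) • M⁻¹ := by rw [hNdef, add_sub_cancel_left]
    rw [hStinv, h1, Matrix.sub_mul, smul_mul_assoc, hMM', Matrix.mul_sub,
      ← Matrix.mul_assoc N⁻¹ N M, hNN', Matrix.one_mul, mul_smul_comm, Matrix.mul_one]
  -- symmetry and positive definiteness of St
  have hMSM_symm : (M⁻¹ * Sigk * M⁻¹).IsSymm := by
    rw [Matrix.IsSymm, Matrix.transpose_mul, Matrix.transpose_mul, hMinvsymm.eq,
      hSigksymm.eq, Matrix.mul_assoc]
  have hStsymm : St.IsSymm := by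
    rw [hSt'', Matrix.IsSymm, Matrix.transpose_add, Matrix.transpose_smul,
      hMinvsymm.eq, hMSM_symm.eq]
  have hMinj : ∀ v : Fin d → ℝ, v ≠ 0 → M⁻¹.mulVec v ≠ 0 := by
    intro v hv hcon
    apply hv
    have : (M * M⁻¹).mulVec v = M.mulVec (M⁻¹.mulVec v) := by
      rw [← Matrix.mulVec_mulVec]
    rw [hMM, Matrix.one_mulVec] at this
    rw [this, hcon, Matrix.mulVec_zero]
  have hStpd : St.PosDef := by
    refine posDef_of_pos hStsymm (fun v hv => ?_)
    have hexpand : v ⬝ᵥ St.mulVec v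
        = v ⬝ᵥ M⁻¹.mulVec v + (r*r) * ((M⁻¹.mulVec v) ⬝ᵥ Sigk.mulVec (M⁻¹.mulVec v)) := by
      rw [hSt'', Matrix.add_mulVec, Matrix.smul_mulVec, dotProduct_add,
        dotProduct_smul, smul_eq_mul]
      congr 1
      rw [← Matrix.mulVec_mulVec, ← Matrix.mulVec_mulVec, dot_symm hMinvsymm,
        dotProduct_comm]
    rw [hexpand]
    have h1 := pd_dot hMinvpd hv
    have h2 := mul_pos (mul_pos hr hr) (pd_dot hSigkpd (hMinj v hv))
    linarith
  refine ⟨hStsymm, hStpd, fun x => ?_⟩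
  -- mean vector
  have hμt' : μt = r • (M⁻¹.mulVec μk) := by
    rw [hμt, hPinv, Matrix.smul_mulVec]
  set q : Fin d → ℝ := Sigk⁻¹.mulVec μk with hqdef
  have hWμt : St⁻¹.mulVec μt = r • (N⁻¹.mulVec q) := by
    rw [hStinv, hμt', Matrix.mulVec_smul]
    congr 1
    rw [Matrix.mulVec_mulVec, Matrix.mul_assoc N⁻¹ (Sigk⁻¹ * M) M⁻¹,
      Matrix.mul_assoc Sigk⁻¹ M M⁻¹, hMM, Matrix.mul_one, hqdef,
      ← Matrix.mulVec_mulVec]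
  -- key matrix identity for the constant term
  have hID : Sigk⁻¹ - Sigk⁻¹ * (N⁻¹ * Sigk⁻¹) = (r*r) • (M⁻¹ * (N⁻¹ * Sigk⁻¹)) := by
    rw [← smul_mul_assoc, hSkinv_eq, Matrix.sub_mul, ← Matrix.mul_assoc N N⁻¹ Sigk⁻¹,
      hNN, Matrix.one_mul]
  -- the denominator integral
  have hGM : (0:ℝ) < Real.sqrt ((2*π)^d / M.det) :=
    Real.sqrt_pos.mpr (div_pos (by positivity) hMpd.det_pos)
  have hGN : (0:ℝ) < Real.sqrt ((2*π)^d / N.det) :=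
    Real.sqrt_pos.mpr (div_pos (by positivity) hNpd.det_pos)
  have hDen : ∀ y : Fin d → ℝ,
      (∫ z : Fin d → ℝ,
        Real.exp (-(1 / (2 * β)) * (V z + dotProduct (z - y) (z - y) / (2 * T))))
      = Real.sqrt ((2*π)^d / M.det)
        * rexp ((1/2) * ((r • y) ⬝ᵥ M⁻¹.mulVec (r • y)) + (-(r/2) * (y ⬝ᵥ y))) := by
    intro y
    have hpt : ∀ z : Fin d → ℝ,
        Real.exp (-(1 / (2 * β)) * (V z + dotProduct (z - y) (z - y) / (2 * T)))
        = rexp (-(1/2) * (z ⬝ᵥ M.mulVec z) + (r • y) ⬝ᵥ z + (-(r/2) * (y ⬝ᵥ y))) := by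
      intro z
      rw [hV z]
      congr 1
      have e2 : dotProduct (z - y) (z - y)
          = z ⬝ᵥ z - 2*(y ⬝ᵥ z) + y ⬝ᵥ y := by
        rw [sub_dotProduct, dotProduct_sub, dotProduct_sub,
          dotProduct_comm z y]
        ring
      have e3 : (r • y) ⬝ᵥ z = r * (y ⬝ᵥ z) := by
        rw [smul_dotProduct, smul_eq_mul]
      rw [hMdot, e2, e3, hrdef]
      field_simp
      ring
    simp_rw [hpt]
    exact gauss_full hMpd (r • y) _
  set b₂ : Fin d → ℝ := r • x + q with hb2
  set k₂ : ℝ := -(1/2) * (x ⬝ᵥ M.mulVec x) - (1/2) * (μk ⬝ᵥ Sigk⁻¹.mulVec μk) with hk2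
  -- pointwise rewrite of the integrand
  have hcomb : ∀ (G c1 a b e : ℝ), G ≠ 0 →
      rexp a / (G * rexp b) * (c1 * rexp e) = c1 / G * rexp (a - b + e) := by
    intro G c1 a b e hG
    rw [Real.exp_add, Real.exp_sub]
    field_simp [Real.exp_ne_zero]
  have hint : (fun y => Kker x y * φ μk Sigk y)
      = fun y => ((2 * π) ^ (-(d:ℝ)/2) * Sigk.det ^ (-(1/2) : ℝ)
          / Real.sqrt ((2*π)^d / M.det))
        * rexp (-(1/2) * (y ⬝ᵥ N.mulVec y) + b₂ ⬝ᵥ y + k₂) := by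
    funext y
    rw [hKker x y, hφ μk Sigk y, hDen y, hcomb _ _ _ _ _ hGM.ne']
    congr 1
    rw [hV x]
    have f1 : y ⬝ᵥ N.mulVec y
        = r*r*(y ⬝ᵥ M⁻¹.mulVec y) + y ⬝ᵥ Sigk⁻¹.mulVec y := by
      rw [hNdef, Matrix.add_mulVec, Matrix.smul_mulVec, dotProduct_add,
        dotProduct_smul, smul_eq_mul]
    have f2 : (r • y) ⬝ᵥ M⁻¹.mulVec (r • y) = r*r*(y ⬝ᵥ M⁻¹.mulVec y) := by
      rw [smul_dotProduct, Matrix.mulVec_smul, dotProduct_smul,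
        smul_eq_mul, smul_eq_mul]
      ring
    have f3 : b₂ ⬝ᵥ y = r * (x ⬝ᵥ y) + μk ⬝ᵥ Sigk⁻¹.mulVec y := by
      rw [hb2, add_dotProduct, smul_dotProduct, smul_eq_mul, hqdef]
      congr 1
      rw [dotProduct_comm, dot_symm hSkinvsymm]
    have f4 : dotProduct (x - y) (x - y)
        = x ⬝ᵥ x - 2*(x ⬝ᵥ y) + y ⬝ᵥ y := by
      rw [sub_dotProduct, dotProduct_sub, dotProduct_sub,
        dotProduct_comm y x]
      ring
    have f5 : dotProduct (y - μk) (Sigk⁻¹.mulVec (y - μk))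
        = y ⬝ᵥ Sigk⁻¹.mulVec y - 2*(μk ⬝ᵥ Sigk⁻¹.mulVec y) + μk ⬝ᵥ Sigk⁻¹.mulVec μk := by
      rw [Matrix.mulVec_sub, sub_dotProduct, dotProduct_sub,
        dotProduct_sub, dot_symm hSkinvsymm y μk]
      ring
    rw [f1, f2, f3, f4, f5, hk2, hMdot, hrdef]
    field_simp
    ring
  rw [hint, integral_const_mul, gauss_full hNpd b₂ k₂, hφ μt St x]
  -- final exponent identity
  have hStinvsymm : (St⁻¹).IsSymm := inv_symm hStsymm
  have g1 : dotProduct (x - μt) (St⁻¹.mulVec (x - μt))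
      = x ⬝ᵥ St⁻¹.mulVec x - 2*(x ⬝ᵥ St⁻¹.mulVec μt) + μt ⬝ᵥ St⁻¹.mulVec μt := by
    rw [Matrix.mulVec_sub, sub_dotProduct, dotProduct_sub,
      dotProduct_sub, dot_symm hStinvsymm μt x]
    ring
  have g2 : x ⬝ᵥ St⁻¹.mulVec x = x ⬝ᵥ M.mulVec x - r*r*(x ⬝ᵥ N⁻¹.mulVec x) := by
    rw [hW, Matrix.sub_mulVec, dotProduct_sub]
    rw [Matrix.smul_mulVec ((r*r)) N⁻¹ x, dotProduct_smul, smul_eq_mul]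
  have g3 : x ⬝ᵥ St⁻¹.mulVec μt = r * (x ⬝ᵥ N⁻¹.mulVec q) := by
    rw [hWμt, dotProduct_smul, smul_eq_mul]
  have g4 : μt ⬝ᵥ St⁻¹.mulVec μt = r*r*(μk ⬝ᵥ M⁻¹.mulVec (N⁻¹.mulVec q)) := by
    rw [hWμt, hμt', smul_dotProduct, dotProduct_smul, smul_eq_mul,
      smul_eq_mul, dotProduct_comm, dot_symm hMinvsymm]
    ring
  have g5 : b₂ ⬝ᵥ N⁻¹.mulVec b₂
      = r*r*(x ⬝ᵥ N⁻¹.mulVec x) + 2*r*(x ⬝ᵥ N⁻¹.mulVec q) + q ⬝ᵥ N⁻¹.mulVec q := by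
    rw [hb2, Matrix.mulVec_add, add_dotProduct, dotProduct_add,
      dotProduct_add, Matrix.mulVec_smul]
    rw [smul_dotProduct, dotProduct_smul, dotProduct_smul,
      smul_dotProduct, smul_eq_mul, smul_eq_mul, smul_eq_mul, smul_eq_mul,
      dot_symm hNinvsymm q x]
    ring
  have g6 : q ⬝ᵥ N⁻¹.mulVec q
      = μk ⬝ᵥ Sigk⁻¹.mulVec μk - r*r*(μk ⬝ᵥ M⁻¹.mulVec (N⁻¹.mulVec q)) := by
    have h := congrArg (fun B : Matrix (Fin d) (Fin d) ℝ => μk ⬝ᵥ B.mulVec μk) hID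
    simp only [Matrix.sub_mulVec, Matrix.smul_mulVec, dotProduct_sub,
      dotProduct_smul, smul_eq_mul, ← Matrix.mulVec_mulVec] at h
    have h2 : μk ⬝ᵥ Sigk⁻¹.mulVec (N⁻¹.mulVec (Sigk⁻¹.mulVec μk))
        = q ⬝ᵥ N⁻¹.mulVec q := by
      rw [← hqdef, dot_symm hSkinvsymm, dotProduct_comm]
    rw [← hqdef, h2] at h
    linarith [h]
  have hexp : (1/2) * (b₂ ⬝ᵥ N⁻¹.mulVec b₂) + k₂
      = -(1/2) * dotProduct (x - μt) (St⁻¹.mulVec (x - μt)) := by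
    rw [g1, g2, g3, g4, g5, g6, hk2]
    ring
  rw [hexp]
  -- the constants
  have hdetSt : St.det = M.det⁻¹ * (Sigk.det * N.det) := by
    rw [hSt', Matrix.det_mul, Matrix.det_mul, Matrix.det_nonsing_inv,
      Ring.inverse_eq_inv', mul_assoc]
  have hconst : (2 * π) ^ (-(d:ℝ)/2) * Sigk.det ^ (-(1/2) : ℝ)
      / Real.sqrt ((2*π)^d / M.det) * Real.sqrt ((2*π)^d / N.det)
      = (2 * π) ^ (-(d:ℝ)/2) * St.det ^ (-(1/2) : ℝ) := by
    have hrc : ∀ a : ℝ, 0 < a → a ^ (-(1/2) : ℝ) = (Real.sqrt a)⁻¹ := by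
      intro a ha
      rw [Real.rpow_neg ha.le, Real.sqrt_eq_rpow]
    rw [hrc _ hSigkpd.det_pos, hrc _ hStpd.det_pos, hdetSt]
    have h2π : (0:ℝ) < (2*π)^d := by positivity
    rw [Real.sqrt_div h2π.le M.det, Real.sqrt_div h2π.le N.det,
      Real.sqrt_mul (inv_nonneg.mpr hMpd.det_pos.le),
      Real.sqrt_mul hSigkpd.det_pos.le, Real.sqrt_inv]
    have s1 : (0:ℝ) < Real.sqrt Sigk.det := Real.sqrt_pos.mpr hSigkpd.det_pos
    have s2 : (0:ℝ) < Real.sqrt M.det := Real.sqrt_pos.mpr hMpd.det_pos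
    have s3 : (0:ℝ) < Real.sqrt N.det := Real.sqrt_pos.mpr hNpd.det_pos
    have sp : (0:ℝ) < Real.sqrt ((2*π)^d) := Real.sqrt_pos.mpr h2π
    field_simp
  rw [← mul_assoc, hconst]
end

section
/- Let a, β, T, σ > 0 and μ ∈ ℝ. Define V(x) = a x²/2, the kernel K(x,y) := exp(−(1/(2β))(V(x) + (x−y)²/(2T))) / ∫_ℝ exp(−(1/(2β))(V(z) + (z−y)²/(2T))) dz, and let φ_{m,v}(x) = (2πv)^{−1/2} exp(−(x−m)²/(2v)) denote the Gaussian density with mean m and variance v. Then for every x ∈ ℝ, ∫_ℝ K(x,y)·φ_{μ,σ²}(y) dy = φ_{μ̃,σ̃²}(x), where μ̃ = μ/(1+aT) and σ̃² = σ²/(1+aT)² + 2βT/(1+aT). -/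
/-- Gaussian integral with linear and constant term. -/
lemma gauss_int {p : ℝ} (hp : 0 < p) (q r : ℝ) :
    (∫ x : ℝ, Real.exp (-p * x ^ 2 + q * x + r))
      = Real.sqrt (Real.pi / p) * Real.exp (r + q ^ 2 / (4 * p)) := by
  have hp0 : p ≠ 0 := ne_of_gt hp
  have h : ∀ x : ℝ, Real.exp (-p * x ^ 2 + q * x + r)
      = Real.exp (-p * (x - q / (2 * p)) ^ 2) * Real.exp (r + q ^ 2 / (4 * p)) := by
    intro x
    rw [← Real.exp_add]
    congr 1
    field_simp
    ring
  simp_rw [h, MeasureTheory.integral_mul_const]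
  rw [MeasureTheory.integral_sub_right_eq_self
      (fun z : ℝ => Real.exp (-p * z ^ 2)) (q / (2 * p)), integral_gaussian]

/-- One-dimensional closed form for the regularized Wasserstein proximal of a
Gaussian under the Ornstein–Uhlenbeck potential `V(x) = a x²/2`:
`∫ K(x,y) φ_{μ,σ²}(y) dy = φ_{μ̃,σ̃²}(x)` with `μ̃ = μ/(1+aT)` and
`σ̃² = σ²/(1+aT)² + 2βT/(1+aT)`. -/
theorem stmt_17 (a β T σ μ : ℝ) (ha : 0 < a) (hβ : 0 < β) (hT : 0 < T) (hσ : 0 < σ)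
    (V : ℝ → ℝ) (hV : ∀ x, V x = a * x ^ 2 / 2)
    (Kker : ℝ → ℝ → ℝ)
    (hKker : ∀ x y, Kker x y
      = Real.exp (-(1 / (2 * β)) * (V x + (x - y) ^ 2 / (2 * T)))
        / ∫ z : ℝ, Real.exp (-(1 / (2 * β)) * (V z + (z - y) ^ 2 / (2 * T))))
    (φ : ℝ → ℝ → ℝ → ℝ)
    (hφ : ∀ m v x, φ m v x
      = (2 * Real.pi * v) ^ (-(1 / 2) : ℝ) * Real.exp (-(x - m) ^ 2 / (2 * v))) :
    ∀ x : ℝ, (∫ y : ℝ, Kker x y * φ μ (σ ^ 2) y)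
      = φ (μ / (1 + a * T)) (σ ^ 2 / (1 + a * T) ^ 2 + 2 * β * T / (1 + a * T)) x := by
  intro x
  have hβ0 : β ≠ 0 := ne_of_gt hβ
  have hT0 : T ≠ 0 := ne_of_gt hT
  have hσ0 : σ ≠ 0 := ne_of_gt hσ
  have hs : (0:ℝ) < 1 + a * T := by positivity
  have hs0 : (1 + a * T) ≠ 0 := ne_of_gt hs
  have hπ := Real.pi_pos
  have hp : (0:ℝ) < (1 + a * T) / (4 * β * T) := by positivity
  have hP : (0:ℝ) < 1 / (4 * β * T * (1 + a * T)) + 1 / (2 * σ ^ 2) := by positivity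
  have hv : (0:ℝ) < σ ^ 2 / (1 + a * T) ^ 2 + 2 * β * T / (1 + a * T) := by positivity
  have hsqp : (0:ℝ) < Real.sqrt (Real.pi / ((1 + a * T) / (4 * β * T))) :=
    Real.sqrt_pos.mpr (by positivity)
  have hsqp0 := ne_of_gt hsqp
  -- denominator computation
  have hden : ∀ y : ℝ,
      (∫ z : ℝ, Real.exp (-(1 / (2 * β)) * (V z + (z - y) ^ 2 / (2 * T))))
        = Real.sqrt (Real.pi / ((1 + a * T) / (4 * β * T)))
          * Real.exp (-(a * y ^ 2 / (4 * β * (1 + a * T)))) := by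
    intro y
    have h1 : ∀ z : ℝ, -(1 / (2 * β)) * (V z + (z - y) ^ 2 / (2 * T))
        = -((1 + a * T) / (4 * β * T)) * z ^ 2 + (y / (2 * β * T)) * z
            + (-(y ^ 2 / (4 * β * T))) := by
      intro z
      rw [hV]
      field_simp
      ring
    simp_rw [h1]
    rw [gauss_int hp]
    congr 1
    rw [Real.exp_eq_exp]
    field_simp
    ring
  -- pointwise rewriting of the integrand
  have hint : ∀ y : ℝ, Kker x y * φ μ (σ ^ 2) y
      = ((2 * Real.pi * σ ^ 2) ^ (-(1 / 2) : ℝ)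
          / Real.sqrt (Real.pi / ((1 + a * T) / (4 * β * T))))
        * Real.exp (-(1 / (4 * β * T * (1 + a * T)) + 1 / (2 * σ ^ 2)) * y ^ 2
            + (x / (2 * β * T) + μ / σ ^ 2) * y
            + (-(a * x ^ 2 / (4 * β)) - x ^ 2 / (4 * β * T) - μ ^ 2 / (2 * σ ^ 2))) := by
    intro y
    rw [hKker, hφ, hden y, hV]
    rw [show (-(1 / (4 * β * T * (1 + a * T)) + 1 / (2 * σ ^ 2)) * y ^ 2
            + (x / (2 * β * T) + μ / σ ^ 2) * y
            + (-(a * x ^ 2 / (4 * β)) - x ^ 2 / (4 * β * T) - μ ^ 2 / (2 * σ ^ 2)))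
        = (-(1 / (2 * β)) * (a * x ^ 2 / 2 + (x - y) ^ 2 / (2 * T))
            - (-(a * y ^ 2 / (4 * β * (1 + a * T)))))
          + (-(y - μ) ^ 2 / (2 * σ ^ 2)) from by field_simp; ring]
    rw [Real.exp_add, Real.exp_sub]
    field_simp
  simp_rw [hint, MeasureTheory.integral_const_mul]
  rw [gauss_int hP, hφ]
  have hexp : (-(a * x ^ 2 / (4 * β)) - x ^ 2 / (4 * β * T) - μ ^ 2 / (2 * σ ^ 2))
      + (x / (2 * β * T) + μ / σ ^ 2) ^ 2
          / (4 * (1 / (4 * β * T * (1 + a * T)) + 1 / (2 * σ ^ 2)))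
      = -(x - μ / (1 + a * T)) ^ 2
          / (2 * (σ ^ 2 / (1 + a * T) ^ 2 + 2 * β * T / (1 + a * T))) := by
    have hd : (4 * β * T * (1 + a * T) * (2 * σ ^ 2) : ℝ) ≠ 0 := by positivity
    rw [div_add_div _ _ (by positivity : (4 * β * T * (1 + a * T) : ℝ) ≠ 0)
        (by positivity : (2 * σ ^ 2 : ℝ) ≠ 0)]
    field_simp
    ring
  have hpre : ((2 * Real.pi * σ ^ 2) ^ (-(1 / 2) : ℝ)
        / Real.sqrt (Real.pi / ((1 + a * T) / (4 * β * T))))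
        * Real.sqrt (Real.pi / (1 / (4 * β * T * (1 + a * T)) + 1 / (2 * σ ^ 2)))
      = (2 * Real.pi * (σ ^ 2 / (1 + a * T) ^ 2 + 2 * β * T / (1 + a * T))) ^ (-(1 / 2) : ℝ) := by
    have hrp : ∀ u : ℝ, 0 < u → u ^ (-(1 / 2) : ℝ) = (Real.sqrt u)⁻¹ := by
      intro u hu
      rw [Real.rpow_neg hu.le, ← Real.sqrt_eq_rpow]
    rw [hrp _ (by positivity), hrp _ (by positivity)]
    have hL0 : (0:ℝ) ≤ (Real.sqrt (2 * Real.pi * σ ^ 2))⁻¹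
        / Real.sqrt (Real.pi / ((1 + a * T) / (4 * β * T)))
        * Real.sqrt (Real.pi / (1 / (4 * β * T * (1 + a * T)) + 1 / (2 * σ ^ 2))) := by
      positivity
    have hR0 : (0:ℝ) ≤ (Real.sqrt (2 * Real.pi
        * (σ ^ 2 / (1 + a * T) ^ 2 + 2 * β * T / (1 + a * T))))⁻¹ := by positivity
    rw [← Real.sqrt_sq hL0, ← Real.sqrt_sq hR0]
    congr 1
    rw [mul_pow, div_pow, inv_pow, inv_pow,
      Real.sq_sqrt (by positivity : (0:ℝ) ≤ 2 * Real.pi * σ ^ 2),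
      Real.sq_sqrt (by positivity : (0:ℝ) ≤ Real.pi / ((1 + a * T) / (4 * β * T))),
      Real.sq_sqrt (by positivity :
        (0:ℝ) ≤ Real.pi / (1 / (4 * β * T * (1 + a * T)) + 1 / (2 * σ ^ 2))),
      Real.sq_sqrt (by positivity :
        (0:ℝ) ≤ 2 * Real.pi * (σ ^ 2 / (1 + a * T) ^ 2 + 2 * β * T / (1 + a * T)))]
    rw [div_add_div _ _ (by positivity : (4 * β * T * (1 + a * T) : ℝ) ≠ 0)
        (by positivity : (2 * σ ^ 2 : ℝ) ≠ 0)]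
    field_simp
    ring
  rw [← mul_assoc, hpre, hexp]
end

section
/- Let a, β, T, η > 0 with σ_k > 0 and μ_k ∈ ℝ. Set μ̃ := μ_k/(1+aT) and σ̃² := σ_k²/(1+aT)² + 2βT/(1+aT). Then the pushforward of the Gaussian measure N(μ_k, σ_k²) on ℝ under the affine map x ↦ (1 − aη)x + ηβ·(x − μ̃)/σ̃² is the Gaussian measure N(μ_{k+1}, σ_{k+1}²), where μ_{k+1} = (1 − aη + ηβ·aT(1+aT)/(σ_k² + 2βT(1+aT)))·μ_k and σ_{k+1}² = (1 − aη + ηβ·(1+aT)²/(σ_k² + 2βT(1+aT)))²·σ_k². -/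
/-!
Writing `D = σ_k² + 2βT(1+aT)`, the regularized variance is `σ̃² = D/(1+aT)²`, so the BRWP update
is the affine map `x ↦ c (x − μ_k) + μ_{k+1}` with `c = 1 − aη + ηβ(1+aT)²/D`. An affine image of
`N(μ, s)` is `N(c μ + d, c² s)`, which gives the claim.
-/

open MeasureTheory ProbabilityTheory

lemma gaussianReal_map_mul_sub_add (μ s c m : ℝ) :
    (gaussianReal μ s.toNNReal).map (fun x => c * (x - μ) + m)
      = gaussianReal m (c ^ 2 * s).toNNReal := by
  have hcomp : (fun x => c * (x - μ) + m) = (· + (m - c * μ)) ∘ (c * ·) := by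
    funext x; simp only [Function.comp]; ring
  rw [hcomp, ← Measure.map_map (by fun_prop) (by fun_prop), gaussianReal_map_const_mul,
    gaussianReal_map_add_const, Real.toNNReal_mul (sq_nonneg c),
    Real.toNNReal_of_nonneg (sq_nonneg c), add_sub_cancel]

lemma brwp_update_eq_mul_sub_add (a β T η μ s x : ℝ) (h : 1 + a * T ≠ 0) :
    (1 - a * η) * x
        + η * β * (x - μ / (1 + a * T)) / (s / (1 + a * T) ^ 2 + 2 * β * T / (1 + a * T))
      = (1 - a * η + η * β * (1 + a * T) ^ 2 / (s + 2 * β * T * (1 + a * T))) * (x - μ)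
        + (1 - a * η + η * β * (a * T * (1 + a * T)) / (s + 2 * β * T * (1 + a * T))) * μ := by
  have hvar : s / (1 + a * T) ^ 2 + 2 * β * T / (1 + a * T)
      = (s + 2 * β * T * (1 + a * T)) / (1 + a * T) ^ 2 := by
    field_simp
  rw [hvar]
  field_simp
  ring

theorem stmt_18_general (a β T η σk μk μt σt2 : ℝ)
    (ha : 0 < a) (hT : 0 < T)
    (hμt : μt = μk / (1 + a * T))
    (hσt2 : σt2 = σk ^ 2 / (1 + a * T) ^ 2 + 2 * β * T / (1 + a * T)) :
    MeasureTheory.Measure.map (fun x => (1 - a * η) * x + η * β * (x - μt) / σt2)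
        (ProbabilityTheory.gaussianReal μk (σk ^ 2).toNNReal)
      = ProbabilityTheory.gaussianReal
          ((1 - a * η + η * β * (a * T * (1 + a * T)) / (σk ^ 2 + 2 * β * T * (1 + a * T)))
            * μk)
          (((1 - a * η + η * β * (1 + a * T) ^ 2 / (σk ^ 2 + 2 * β * T * (1 + a * T))) ^ 2
            * σk ^ 2).toNNReal) := by
  have h : 1 + a * T ≠ 0 := by positivity
  subst hμt hσt2
  simp_rw [brwp_update_eq_mul_sub_add a β T η μk (σk ^ 2) _ h]
  exact gaussianReal_map_mul_sub_add ..

/-- One BRWP step for the quadratic potential `V(x) = a x²/2`: the pushforward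
of `N(μ_k, σ_k²)` under the affine map `x ↦ (1 − aη)x + ηβ(x − μ̃)/σ̃²`, where
`μ̃ = μ_k/(1+aT)` and `σ̃² = σ_k²/(1+aT)² + 2βT/(1+aT)`, is the Gaussian
`N(μ_{k+1}, σ_{k+1}²)` with
`μ_{k+1} = (1 − aη + ηβ aT(1+aT)/(σ_k² + 2βT(1+aT))) μ_k` and
`σ_{k+1}² = (1 − aη + ηβ(1+aT)²/(σ_k² + 2βT(1+aT)))² σ_k²`. -/
theorem stmt_18 (a β T η σk μk μt σt2 : ℝ)
    (ha : 0 < a) (hβ : 0 < β) (hT : 0 < T) (hη : 0 < η) (hσk : 0 < σk)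
    (hμt : μt = μk / (1 + a * T))
    (hσt2 : σt2 = σk ^ 2 / (1 + a * T) ^ 2 + 2 * β * T / (1 + a * T)) :
    MeasureTheory.Measure.map (fun x => (1 - a * η) * x + η * β * (x - μt) / σt2)
        (ProbabilityTheory.gaussianReal μk (σk ^ 2).toNNReal)
      = ProbabilityTheory.gaussianReal
          ((1 - a * η + η * β * (a * T * (1 + a * T)) / (σk ^ 2 + 2 * β * T * (1 + a * T)))
            * μk)
          (((1 - a * η + η * β * (1 + a * T) ^ 2 / (σk ^ 2 + 2 * β * T * (1 + a * T))) ^ 2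
            * σk ^ 2).toNNReal) :=
  stmt_18_general a β T η σk μk μt σt2 ha hT hμt hσt2
end
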